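/- arXiv:1412.8135 — 3 statements merged into one kernel-verified Lean document; each statement's English description precedes it below -/
import Mathlib

section
/- If K₂ is a 4×4 complex matrix of the form Q·K_φ where Q = [[t₁₁, -t₁₂, -t₁₃, -t₁₄], [t₁₂, t₁₁, t₁₄, -t₁₃], [t₁₃, -t₁₄, t₁₁, t₁₂], [t₁₄, t₁₃, -t₁₂, t₁₁]] is orthogonal and K_φ is the block rotation diag(I₂, R(φ)), and B is a 4×4 matrix whose columns are (h₁, i·h₁, h₂, i·h₂) for column vectors h₁, h₂ ∈ ℂ⁴, then B·K₂⁻¹ again has columns of the form (h₁', i·h₁', h₂', i·h₂') for some h₁', h₂' ∈ ℂ⁴. -/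
open Matrix Complex

/-- The quaternionic-form matrix `Q`. -/
def Qmat (t11 t12 t13 t14 : ℂ) : Matrix (Fin 4) (Fin 4) ℂ :=
  !![t11, -t12, -t13, -t14;
     t12, t11, t14, -t13;
     t13, -t14, t11, t12;
     t14, t13, -t12, t11]

/-- The block rotation `K_φ = diag(I₂, R(φ))`. -/
noncomputable def Kphi (φ : ℝ) : Matrix (Fin 4) (Fin 4) ℂ :=
  !![1, 0, 0, 0;
     0, 1, 0, 0;
     0, 0, (Real.cos φ : ℂ), (Real.sin φ : ℂ);
     0, 0, (-Real.sin φ : ℂ), (Real.cos φ : ℂ)]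

/-- A 4×4 matrix with columns `(h₁, i h₁, h₂, i h₂)`. -/
def colPat (h1 h2 : Fin 4 → ℂ) : Matrix (Fin 4) (Fin 4) ℂ :=
  Matrix.of fun j l =>
    if l = 0 then h1 j else if l = 1 then I * h1 j
    else if l = 2 then h2 j else I * h2 j

lemma Kphi_transpose (φ : ℝ) :
    (Kphi φ)ᵀ = !![1, 0, 0, 0;
     0, 1, 0, 0;
     0, 0, (Real.cos φ : ℂ), (-Real.sin φ : ℂ);
     0, 0, (Real.sin φ : ℂ), (Real.cos φ : ℂ)] := by
  ext i j
  fin_cases i <;> fin_cases j <;> simp [Kphi, Matrix.vecHead, Matrix.vecTail]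

lemma Qmat_transpose (t11 t12 t13 t14 : ℂ) :
    (Qmat t11 t12 t13 t14)ᵀ = !![t11, t12, t13, t14;
     -t12, t11, -t14, t13;
     -t13, t14, t11, -t12;
     -t14, -t13, t12, t11] := by
  ext i j
  fin_cases i <;> fin_cases j <;> simp [Qmat]

lemma cos_sq_add_sin_sq'' (φ : ℝ) :
    (Real.cos φ : ℂ) * (Real.cos φ : ℂ) + (Real.sin φ : ℂ) * (Real.sin φ : ℂ) = 1 := by
  push_cast [← Complex.ofReal_mul, ← Complex.ofReal_add]
  norm_cast
  rw [← sq, ← sq]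
  exact Real.cos_sq_add_sin_sq φ

/-- Multiplying a column-patterned matrix by `K₂⁻¹` preserves the column pattern. -/
theorem colPat_mul_K2_inv (t11 t12 t13 t14 : ℂ) (φ : ℝ) (h1 h2 : Fin 4 → ℂ)
    (horth : (Qmat t11 t12 t13 t14)ᵀ * Qmat t11 t12 t13 t14 = 1) :
    ∃ h1' h2' : Fin 4 → ℂ,
      colPat h1 h2 * (Qmat t11 t12 t13 t14 * Kphi φ)⁻¹ = colPat h1' h2' := by
  set Q := Qmat t11 t12 t13 t14
  set c : ℂ := (Real.cos φ : ℂ)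
  set s : ℂ := (Real.sin φ : ℂ)
  have hK : Kphi φ * (Kphi φ)ᵀ = 1 := by
    have hc := cos_sq_add_sin_sq'' φ
    rw [Kphi_transpose]
    ext i j
    fin_cases i <;> fin_cases j <;>
      simp [Kphi, mul_apply, Fin.sum_univ_four, Matrix.one_apply, Matrix.vecHead,
        Matrix.vecTail, Matrix.transpose_apply, c, s] <;>
      (first
        | ring1
        | linear_combination -(Complex.cos_sq_add_sin_sq (φ : ℂ))
        | linear_combination Complex.cos_sq_add_sin_sq (φ : ℂ))
  have hQ : Q * Qᵀ = 1 := mul_eq_one_comm.mp (by rw [← transpose_transpose Q] at horth ⊢; exact horth)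
  have hinv : (Q * Kphi φ)⁻¹ = (Kphi φ)ᵀ * Qᵀ := by
    apply inv_eq_right_inv
    calc Q * Kphi φ * ((Kphi φ)ᵀ * Qᵀ)
        = Q * (Kphi φ * (Kphi φ)ᵀ) * Qᵀ := by noncomm_ring
      _ = 1 := by rw [hK, mul_one, hQ]
  rw [hinv, Kphi_transpose, Qmat_transpose]
  refine ⟨fun j => (t11 - I * t12) * h1 j + (c + I * s) * (-t13 - I * t14) * h2 j,
          fun j => (t13 - I * t14) * h1 j + (c + I * s) * (t11 + I * t12) * h2 j, ?_⟩
  ext j l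
  fin_cases l <;>
    · simp [colPat, mul_apply, Fin.sum_univ_four, c, s]
      ring_nf
      simp [Complex.I_sq, show (I : ℂ) ^ 3 = -I from by rw [pow_succ, Complex.I_sq]; ring]
      ring
end

section
/- Let H(λ) = I₈ + λ⁻¹H₁ + λ⁻²H₂ where H₁ = [[0, f, 0], [0, 0, -f^♯], [0, 0, 0]] and H₂ = [[0, 0, g], [0, 0, 0], [0, 0, 0]] in 2+4+2 block form, with f a 2×4 matrix, f^♯ = J₄ fᵗ J₂, and g a 2×2 matrix satisfying g' = -f·f̌^♯ where f' = f̌ and f(0) = 0, g(0) = 0 for matrices f̌ of holomorphic functions. Then H⁻¹ dH = λ⁻¹ [[0, f̌, 0], [0, 0, -f̌^♯], [0, 0, 0]] dz. -/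
open Matrix

/-- Index type for the 2+4+2 block structure of 8×8 matrices. -/
abbrev Idx8 := Fin 2 ⊕ (Fin 4 ⊕ Fin 2)

/-- Assemble an 8×8 matrix from nine blocks in the 2+4+2 partition. -/
def blk (A11 : Matrix (Fin 2) (Fin 2) ℂ) (A12 : Matrix (Fin 2) (Fin 4) ℂ)
    (A13 : Matrix (Fin 2) (Fin 2) ℂ)
    (A21 : Matrix (Fin 4) (Fin 2) ℂ) (A22 : Matrix (Fin 4) (Fin 4) ℂ)
    (A23 : Matrix (Fin 4) (Fin 2) ℂ)
    (A31 : Matrix (Fin 2) (Fin 2) ℂ) (A32 : Matrix (Fin 2) (Fin 4) ℂ)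
    (A33 : Matrix (Fin 2) (Fin 2) ℂ) : Matrix Idx8 Idx8 ℂ :=
  Matrix.of fun i j =>
    match i, j with
    | .inl i, .inl j => A11 i j
    | .inl i, .inr (.inl j) => A12 i j
    | .inl i, .inr (.inr j) => A13 i j
    | .inr (.inl i), .inl j => A21 i j
    | .inr (.inl i), .inr (.inl j) => A22 i j
    | .inr (.inl i), .inr (.inr j) => A23 i j
    | .inr (.inr i), .inl j => A31 i j
    | .inr (.inr i), .inr (.inl j) => A32 i j
    | .inr (.inr i), .inr (.inr j) => A33 i j

/-- The `n×n` anti-diagonal matrix of ones. -/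
def Jmat (n : ℕ) : Matrix (Fin n) (Fin n) ℂ :=
  Matrix.of fun i j => if (i : ℕ) + (j : ℕ) = n - 1 then 1 else 0

/-- `f^♯ = J₄ fᵀ J₂` for a 2×4 matrix `f`. -/
noncomputable def sharp (f : Matrix (Fin 2) (Fin 4) ℂ) : Matrix (Fin 4) (Fin 2) ℂ :=
  Jmat 4 * fᵀ * Jmat 2

/-- `H(λ) = I₈ + λ⁻¹H₁ + λ⁻²H₂`. -/
noncomputable def Hloop (lam : ℂ) (f : ℂ → Matrix (Fin 2) (Fin 4) ℂ)
    (g : ℂ → Matrix (Fin 2) (Fin 2) ℂ) (z : ℂ) : Matrix Idx8 Idx8 ℂ :=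
  1 + lam⁻¹ • blk 0 (f z) 0 0 0 (-(sharp (f z))) 0 0 0
    + (lam⁻¹) ^ 2 • blk 0 0 (g z) 0 0 0 0 0 0

/-!
`H = 1 + N` with `N` strictly upper triangular for the 2+4+2 block structure, so every product
of three such matrices vanishes. Hence `H⁻¹ = 1 - N + N²` and `H⁻¹ H' = N' - N N'`, since `N'` is
strictly upper triangular too. The only block of `N N'` is `-λ⁻² f f̌^♯` in the corner, and it
cancels the corner `λ⁻² g'` of `N'` exactly by the differential equation for `g`.
-/

def strictUpper (X : Matrix (Fin 2) (Fin 4) ℂ) (Z : Matrix (Fin 2) (Fin 2) ℂ)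
    (Y : Matrix (Fin 4) (Fin 2) ℂ) : Matrix Idx8 Idx8 ℂ :=
  blk 0 X Z 0 0 Y 0 0 0

section StrictUpper

variable {X X' X'' : Matrix (Fin 2) (Fin 4) ℂ} {Z Z' Z'' : Matrix (Fin 2) (Fin 2) ℂ}
  {Y Y' Y'' : Matrix (Fin 4) (Fin 2) ℂ}

@[simp]
lemma strictUpper_zero : strictUpper 0 0 0 = 0 := by
  ext (i | i | i) (j | j | j) <;> rfl

lemma strictUpper_add :
    strictUpper X Z Y + strictUpper X' Z' Y' = strictUpper (X + X') (Z + Z') (Y + Y') := by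
  ext (i | i | i) (j | j | j) <;> simp [strictUpper, blk]

lemma strictUpper_sub :
    strictUpper X Z Y - strictUpper X' Z' Y' = strictUpper (X - X') (Z - Z') (Y - Y') := by
  ext (i | i | i) (j | j | j) <;> simp [strictUpper, blk]

lemma smul_strictUpper (c : ℂ) : c • strictUpper X Z Y = strictUpper (c • X) (c • Z) (c • Y) := by
  ext (i | i | i) (j | j | j) <;> simp [strictUpper, blk]

lemma strictUpper_mul_strictUpper :
    strictUpper X Z Y * strictUpper X' Z' Y' = strictUpper 0 (X * Y') 0 := by
  ext (i | i | i) (j | j | j) <;>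
    simp [strictUpper, blk, Matrix.mul_apply, Fintype.sum_sum_type]

lemma strictUpper_mul_strictUpper_mul_strictUpper :
    strictUpper X Z Y * strictUpper X' Z' Y' * strictUpper X'' Z'' Y'' = 0 := by
  rw [strictUpper_mul_strictUpper, strictUpper_mul_strictUpper, Matrix.zero_mul, strictUpper_zero]

lemma hasDerivAt_strictUpper_apply {X : ℂ → Matrix (Fin 2) (Fin 4) ℂ}
    {Z : ℂ → Matrix (Fin 2) (Fin 2) ℂ} {Y : ℂ → Matrix (Fin 4) (Fin 2) ℂ} {z : ℂ}
    (hX : ∀ i j, HasDerivAt (fun w => X w i j) (X' i j) z)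
    (hZ : ∀ i j, HasDerivAt (fun w => Z w i j) (Z' i j) z)
    (hY : ∀ i j, HasDerivAt (fun w => Y w i j) (Y' i j) z) (i j : Idx8) :
    HasDerivAt (fun w => strictUpper (X w) (Z w) (Y w) i j) (strictUpper X' Z' Y' i j) z := by
  rcases i with i | i | i <;> rcases j with j | j | j
  all_goals first
    | exact hX i j | exact hZ i j | exact hY i j | exact hasDerivAt_const z (0 : ℂ)

end StrictUpper

lemma inv_one_add_eq_of_mul_mul_eq_zero {n R : Type*} [Fintype n] [DecidableEq n] [CommRing R]
    {N : Matrix n n R} (hN : N * N * N = 0) : (1 + N)⁻¹ = 1 - N + N * N :=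
  Matrix.inv_eq_left_inv <| by
    calc (1 - N + N * N) * (1 + N) = 1 + N * N * N := by noncomm_ring
      _ = 1 := by rw [hN, add_zero]

lemma hasDerivAt_sharp_apply {f : ℂ → Matrix (Fin 2) (Fin 4) ℂ} {f' : Matrix (Fin 2) (Fin 4) ℂ}
    {z : ℂ} (hf : ∀ i j, HasDerivAt (fun w => f w i j) (f' i j) z) (i : Fin 4) (j : Fin 2) :
    HasDerivAt (fun w => sharp (f w) i j) (sharp f' i j) z := by
  simp only [sharp, Matrix.mul_apply, Matrix.transpose_apply, Finset.sum_mul]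
  exact HasDerivAt.fun_sum fun l _ => HasDerivAt.fun_sum fun k _ =>
    ((hf l k).const_mul (Jmat 4 i k)).mul_const (Jmat 2 l j)

lemma Hloop_eq_one_add_strictUpper (lam : ℂ) (f : ℂ → Matrix (Fin 2) (Fin 4) ℂ)
    (g : ℂ → Matrix (Fin 2) (Fin 2) ℂ) (z : ℂ) :
    Hloop lam f g z
      = 1 + strictUpper (lam⁻¹ • f z) (lam⁻¹ ^ 2 • g z) (-(lam⁻¹ • sharp (f z))) := by
  rw [Hloop, add_assoc]
  change _ + (_ • strictUpper _ _ _ + _ • strictUpper _ _ _) = _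
  rw [smul_strictUpper, smul_strictUpper, strictUpper_add]
  simp

lemma hasDerivAt_Hloop_apply (lam : ℂ) {f : ℂ → Matrix (Fin 2) (Fin 4) ℂ}
    {f' : Matrix (Fin 2) (Fin 4) ℂ} {g : ℂ → Matrix (Fin 2) (Fin 2) ℂ}
    {g' : Matrix (Fin 2) (Fin 2) ℂ} {z : ℂ}
    (hf : ∀ i j, HasDerivAt (fun w => f w i j) (f' i j) z)
    (hg : ∀ i j, HasDerivAt (fun w => g w i j) (g' i j) z) (i j : Idx8) :
    HasDerivAt (fun w => Hloop lam f g w i j)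
      (strictUpper (lam⁻¹ • f') (lam⁻¹ ^ 2 • g') (-(lam⁻¹ • sharp f')) i j) z := by
  simp only [Hloop_eq_one_add_strictUpper, Matrix.add_apply]
  exact (hasDerivAt_strictUpper_apply (fun i j => (hf i j).const_mul lam⁻¹)
    (fun i j => (hg i j).const_mul (lam⁻¹ ^ 2))
    (fun i j => ((hasDerivAt_sharp_apply hf i j).const_mul lam⁻¹).neg) i j).const_add _

theorem Hloop_maurer_cartan_general (lam : ℂ)
    (f fd : ℂ → Matrix (Fin 2) (Fin 4) ℂ) (g : ℂ → Matrix (Fin 2) (Fin 2) ℂ)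
    (hf : ∀ z i j, HasDerivAt (fun w => f w i j) (fd z i j) z)
    (hg : ∀ z i j, HasDerivAt (fun w => g w i j) ((-(f z * sharp (fd z))) i j) z) :
    ∀ z, (Hloop lam f g z)⁻¹
        * (Matrix.of fun i j => deriv (fun w => Hloop lam f g w i j) z)
      = lam⁻¹ • blk 0 (fd z) 0 0 0 (-(sharp (fd z))) 0 0 0 := by
  intro z
  have hdH : (Matrix.of fun i j => deriv (fun w => Hloop lam f g w i j) z)
      = strictUpper (lam⁻¹ • fd z) (lam⁻¹ ^ 2 • -(f z * sharp (fd z)))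
          (-(lam⁻¹ • sharp (fd z))) := by
    ext i j
    exact (hasDerivAt_Hloop_apply lam (hf z) (hg z) i j).deriv
  rw [hdH, Hloop_eq_one_add_strictUpper,
    inv_one_add_eq_of_mul_mul_eq_zero strictUpper_mul_strictUpper_mul_strictUpper, add_mul,
    strictUpper_mul_strictUpper_mul_strictUpper, add_zero, sub_mul, one_mul,
    strictUpper_mul_strictUpper, strictUpper_sub]
  change _ = lam⁻¹ • strictUpper _ _ _
  rw [smul_strictUpper]
  congr 1 <;> simp [smul_smul, pow_two]

/-- `H⁻¹ dH = λ⁻¹ [[0, f̌, 0], [0, 0, -f̌^♯], [0, 0, 0]] dz`. -/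
theorem Hloop_maurer_cartan (lam : ℂ) (hlam : lam ≠ 0)
    (f fd : ℂ → Matrix (Fin 2) (Fin 4) ℂ) (g : ℂ → Matrix (Fin 2) (Fin 2) ℂ)
    (hf : ∀ z i j, HasDerivAt (fun w => f w i j) (fd z i j) z)
    (hf0 : f 0 = 0)
    (hg : ∀ z i j, HasDerivAt (fun w => g w i j) ((-(f z * sharp (fd z))) i j) z)
    (hg0 : g 0 = 0) :
    ∀ z, (Hloop lam f g z)⁻¹
        * (Matrix.of fun i j => deriv (fun w => Hloop lam f g w i j) z)
      = lam⁻¹ • blk 0 (fd z) 0 0 0 (-(sharp (fd z))) 0 0 0 :=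
  Hloop_maurer_cartan_general lam f fd g hf hg
end

section
/- With f = [[0, 0, -z, -z²/2], [2z, -z², 0, 0]], f^♯ = J₄ fᵗ J₂, g = (z³/3)·diag(-1, 1), J̌₄ = diag-blocks with (J̌₄)₁₁ = 1, (J̌₄)₂₃ = (J̌₄)₃₂ = 1, (J̌₄)₄₄ = 1, and r = |z|, the matrix d = I₂ + f̄^{t♯} J̌₄ f^♯ + ḡᵗ g equals [[1 + 4r² + r⁶/9, r²z̄], [r²z, 1 + r⁴/4 + r⁶/9]], and its determinant is (1 + 4r² + r⁴/4 + r⁶/9)(1 + r⁶/9). -/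
/-!
`J₄` and `J₂` are the permutation matrices of index reversal, so `f^♯` is `fᵀ` with rows and
columns reversed; in particular `♯` commutes with entrywise conjugation and
`d = I₂ + (f^♯)ᴴ J̌₄ f^♯ + gᴴ g`. Every entry is then a monomial in `z, z̄`, which `z̄ z = r²` turns
into the stated one. In the determinant, the product `r⁶` of the off-diagonal entries cancels the
cross term `4r² · r⁴/4` of the diagonal ones, which is why it factors.
-/

open Matrix Complex

def J4check : Matrix (Fin 4) (Fin 4) ℂ := !![1, 0, 0, 0; 0, 0, 1, 0; 0, 1, 0, 0; 0, 0, 0, 1]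

noncomputable def fEx (z : ℂ) : Matrix (Fin 2) (Fin 4) ℂ :=
  !![0, 0, -z, -z ^ 2 / 2; 2 * z, -z ^ 2, 0, 0]

noncomputable def gEx (z : ℂ) : Matrix (Fin 2) (Fin 2) ℂ :=
  (z ^ 3 / 3) • !![-1, 0; 0, 1]

noncomputable def mconj {m n : Type*} (A : Matrix m n ℂ) : Matrix m n ℂ :=
  A.map (starRingEnd ℂ)

theorem Jmat_apply {n : ℕ} (i j : Fin n) : Jmat n i j = if j = i.rev then 1 else 0 := by
  simp only [Jmat, Matrix.of_apply, Fin.ext_iff, Fin.val_rev]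
  congr 1
  apply propext
  omega

theorem Jmat_mul {n k : ℕ} (A : Matrix (Fin n) (Fin k) ℂ) :
    Jmat n * A = A.submatrix Fin.rev id := by
  ext i j
  simp [Matrix.mul_apply, Jmat_apply]

theorem mul_Jmat {n k : ℕ} (A : Matrix (Fin k) (Fin n) ℂ) :
    A * Jmat n = A.submatrix id Fin.rev := by
  ext i j
  simp [Matrix.mul_apply, Jmat_apply, eq_comm (a := j), Fin.rev_eq_iff]

theorem sharp_eq_transpose_submatrix (f : Matrix (Fin 2) (Fin 4) ℂ) :
    sharp f = (f.submatrix Fin.rev Fin.rev)ᵀ := by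
  rw [sharp, Jmat_mul, mul_Jmat]
  rfl

theorem sharp_mconj (f : Matrix (Fin 2) (Fin 4) ℂ) : sharp (mconj f) = mconj (sharp f) := by
  simp only [sharp_eq_transpose_submatrix]
  rfl

theorem transpose_mconj {m n : Type*} (A : Matrix m n ℂ) : (mconj A)ᵀ = Aᴴ := rfl

theorem sharp_fEx (z : ℂ) : sharp (fEx z) = !![0, -z ^ 2 / 2; 0, -z; -z ^ 2, 0; 2 * z, 0] := by
  rw [sharp_eq_transpose_submatrix]
  ext i j
  fin_cases i <;> fin_cases j <;> rfl

theorem conjTranspose_sharp_fEx_mul_J4check_mul (z : ℂ) :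
    (sharp (fEx z))ᴴ * J4check * sharp (fEx z) =
      !![4 * (‖z‖ : ℂ) ^ 2, (‖z‖ : ℂ) ^ 2 * starRingEnd ℂ z;
         (‖z‖ : ℂ) ^ 2 * z, (‖z‖ : ℂ) ^ 4 / 4] := by
  have hr : (‖z‖ : ℂ) ^ 2 = starRingEnd ℂ z * z := (conj_mul' z).symm
  rw [sharp_fEx, show (‖z‖ : ℂ) ^ 4 = ((‖z‖ : ℂ) ^ 2) ^ 2 by ring, hr]
  ext i j
  fin_cases i <;> fin_cases j <;>
    simp [J4check, Matrix.mul_apply, Fin.sum_univ_four, conj_ofNat] <;> ring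

theorem conjTranspose_gEx_mul_gEx (z : ℂ) :
    (gEx z)ᴴ * gEx z = ((‖z‖ : ℂ) ^ 6 / 9) • (1 : Matrix (Fin 2) (Fin 2) ℂ) := by
  have hr : (‖z‖ : ℂ) ^ 6 = (starRingEnd ℂ z * z) ^ 3 := by rw [conj_mul']; ring
  ext i j
  fin_cases i <;> fin_cases j <;>
    simp [gEx, Matrix.mul_apply, Fin.sum_univ_two, conj_ofNat, hr] <;> ring

noncomputable def dEx (z : ℂ) : Matrix (Fin 2) (Fin 2) ℂ :=
  1 + (sharp (mconj (fEx z)))ᵀ * J4check * sharp (fEx z) + (mconj (gEx z))ᵀ * gEx z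

theorem dEx_eq (z : ℂ) :
    dEx z = !![1 + 4 * (‖z‖ : ℂ) ^ 2 + (‖z‖ : ℂ) ^ 6 / 9, (‖z‖ : ℂ) ^ 2 * starRingEnd ℂ z;
               (‖z‖ : ℂ) ^ 2 * z, 1 + (‖z‖ : ℂ) ^ 4 / 4 + (‖z‖ : ℂ) ^ 6 / 9] := by
  rw [dEx, sharp_mconj, transpose_mconj, transpose_mconj, conjTranspose_sharp_fEx_mul_J4check_mul,
    conjTranspose_gEx_mul_gEx, one_fin_two, smul_of]
  ext i j
  fin_cases i <;> fin_cases j <;> simp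

theorem det_dEx (z : ℂ) :
    (dEx z).det = (1 + 4 * (‖z‖ : ℂ) ^ 2 + (‖z‖ : ℂ) ^ 4 / 4 + (‖z‖ : ℂ) ^ 6 / 9)
      * (1 + (‖z‖ : ℂ) ^ 6 / 9) := by
  rw [dEx_eq, det_fin_two_of]
  linear_combination (-(‖z‖ : ℂ) ^ 4) * conj_mul' z

/-- Computation of `d = I₂ + f̄^{t♯} J̌₄ f^♯ + ḡᵗ g` and its determinant, with `r = |z|`. -/
theorem dEx_formula (z : ℂ) :
    (1 : Matrix (Fin 2) (Fin 2) ℂ) + (sharp (mconj (fEx z)))ᵀ * J4check * sharp (fEx z)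
        + (mconj (gEx z))ᵀ * gEx z
      = !![1 + 4 * (‖z‖ : ℂ) ^ 2 + (‖z‖ : ℂ) ^ 6 / 9,
            (‖z‖ : ℂ) ^ 2 * (starRingEnd ℂ) z;
           (‖z‖ : ℂ) ^ 2 * z,
            1 + (‖z‖ : ℂ) ^ 4 / 4 + (‖z‖ : ℂ) ^ 6 / 9] ∧
    ((1 : Matrix (Fin 2) (Fin 2) ℂ) + (sharp (mconj (fEx z)))ᵀ * J4check * sharp (fEx z)
        + (mconj (gEx z))ᵀ * gEx z).det
      = (1 + 4 * (‖z‖ : ℂ) ^ 2 + (‖z‖ : ℂ) ^ 4 / 4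
          + (‖z‖ : ℂ) ^ 6 / 9) * (1 + (‖z‖ : ℂ) ^ 6 / 9) :=
  ⟨dEx_eq z, det_dEx z⟩
end
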